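/- Let τ > 0, σ > 0 and k ∈ ℝ. Regard the Black-Scholes call price u^BS(σ; z) = e^z Φ(d₊(σ,z)) − e^k Φ(d₋(σ,z)) as a function of z, where d±(σ,z) = (z − k ± σ²τ/2)/(σ√τ) and Φ is the standard normal CDF, and set G(z) := ∂_z² u^BS(σ; z) − ∂_z u^BS(σ; z). Then for every m ∈ ℕ and every z ∈ ℝ, the m-th derivative of G satisfies G^{(m)}(z) = (−1/√(2σ²τ))^m · H_m(w) · (1/(τσ)) · ∂_σ u^BS(σ; z), where w = (z − k − σ²τ/2)/√(2σ²τ) and H_m is the m-th physicists' Hermite polynomial, characterized by H_m(x) = (−1)^m e^{x²} (d^m/dx^m) e^{−x²}, equivalently H_m(x) = 2^{m/2}·He_m(x√2) with He_m the probabilists' Hermite polynomial. -/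

import Mathlib

open Real

/-- The standard normal CDF. -/
noncomputable def normCDF (x : ℝ) : ℝ :=
  ∫ t in Set.Iic x, (2 * π) ^ (-(1 : ℝ) / 2) * Real.exp (-t ^ 2 / 2)

/-- The Black-Scholes call price as a function of volatility `σ` and log-price `z`. -/
noncomputable def uBS (τ k σ z : ℝ) : ℝ :=
  Real.exp z * normCDF ((z - k + σ ^ 2 * τ / 2) / (σ * Real.sqrt τ))
    - Real.exp k * normCDF ((z - k - σ ^ 2 * τ / 2) / (σ * Real.sqrt τ))

/-- The physicists' Hermite polynomial `H_m`, expressed through the probabilists'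
Hermite polynomial `He_m` of Mathlib via `H_m(x) = 2^(m/2) · He_m(x·√2)`. -/
noncomputable def physHermite (m : ℕ) (x : ℝ) : ℝ :=
  2 ^ ((m : ℝ) / 2) * ((Polynomial.hermite m).map (Int.castRingHom ℝ)).eval (x * Real.sqrt 2)

/-!
The identity `e^z φ(d₊) = e^k φ(d₋)` makes the `z`-derivative of the call price `e^z Φ(d₊)`, so
`∂_z² u - ∂_z u = e^k φ(d₋) / (σ√τ)`, while the vega `∂_σ u` is `e^k φ(d₋) √τ`. As a function of
`z`, `e^k φ(d₋)` is a multiple of `exp (-w²)` with `w = (z - k - σ²τ/2) / √(2σ²τ)`, and by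
Rodrigues' formula the `m`-th derivative of `exp (-w²)` is `(-1/√(2σ²τ))^m H_m(w) exp (-w²)`.
-/

open MeasureTheory Set

theorem hasDerivAt_integral_Iic {E : Type*} [NormedAddCommGroup E] [NormedSpace ℝ E]
    [CompleteSpace E] {f : ℝ → E} (hf : Continuous f) (hfi : Integrable f) (x : ℝ) :
    HasDerivAt (fun y => ∫ t in Iic y, f t) (f x) x := by
  have hsplit :
      (fun y => ∫ t in Iic y, f t) = fun y => (∫ t in Iic 0, f t) + ∫ t in 0..y, f t := by
    funext y
    rw [← intervalIntegral.integral_Iic_sub_Iic hfi.integrableOn hfi.integrableOn,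
      add_sub_cancel]
  rw [hsplit]
  exact (intervalIntegral.integral_hasDerivAt_right hfi.intervalIntegrable
    hf.aestronglyMeasurable.stronglyMeasurableAtFilter hf.continuousAt).const_add _

noncomputable def normPDF (x : ℝ) : ℝ := (2 * π) ^ (-(1 : ℝ) / 2) * exp (-x ^ 2 / 2)

theorem integrable_normPDF : Integrable normPDF := by
  have h := (integrable_exp_neg_mul_sq (b := 1 / 2) (by norm_num)).const_mul
    ((2 * π) ^ (-(1 : ℝ) / 2))
  convert h using 3 with x
  rw [normPDF]
  ring_nf

theorem hasDerivAt_normCDF (x : ℝ) : HasDerivAt normCDF (normPDF x) x :=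
  hasDerivAt_integral_Iic (f := normPDF) (by unfold normPDF; fun_prop) integrable_normPDF x

theorem normPDF_div (x s : ℝ) :
    normPDF (x / s) = (2 * π) ^ (-(1 : ℝ) / 2) * exp (-(x / √(2 * s ^ 2)) ^ 2) := by
  rw [normPDF, div_pow, div_pow, sq_sqrt (by positivity)]
  ring_nf

theorem iteratedDeriv_comp_sub_div {𝕜 : Type*} [NontriviallyNormedField 𝕜] {m : ℕ} {f : 𝕜 → 𝕜}
    (hf : ContDiff 𝕜 m f) (c s z : 𝕜) :
    iteratedDeriv m (fun z => f ((z - c) / s)) z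
      = (1 / s) ^ m * iteratedDeriv m f ((z - c) / s) := by
  have h := congrFun (iteratedDeriv_comp_sub_const m (fun y => f (s⁻¹ * y)) c) z
  simp only [iteratedDeriv_comp_const_mul hf] at h
  simpa only [div_eq_inv_mul, mul_one] using h

theorem iteratedDeriv_exp_neg_sq (m : ℕ) (x : ℝ) :
    iteratedDeriv m (fun x => exp (-x ^ 2)) x = (-1) ^ m * physHermite m x * exp (-x ^ 2) := by
  have hsq (y : ℝ) : (√2 * y) ^ 2 / 2 = y ^ 2 := by
    rw [mul_pow, sq_sqrt zero_le_two]
    ring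
  have hscale : (fun x : ℝ => exp (-x ^ 2)) = fun x => exp (-((√2 * x) ^ 2 / 2)) := by
    simp only [hsq]
  rw [hscale, iteratedDeriv_comp_const_mul (f := fun y => exp (-(y ^ 2 / 2))) (by fun_prop)]
  beta_reduce
  rw [iteratedDeriv_eq_iterate, Polynomial.deriv_gaussian_eq_hermite_mul_gaussian, hsq,
    physHermite, rpow_div_two_eq_sqrt _ zero_le_two, rpow_natCast, ← algebraMap_int_eq,
    Polynomial.eval_map_algebraMap, mul_comm x]
  ring

theorem iteratedDeriv_exp_neg_sq_comp_sub_div (m : ℕ) (c s z : ℝ) :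
    iteratedDeriv m (fun z => exp (-((z - c) / s) ^ 2)) z
      = (-1 / s) ^ m * physHermite m ((z - c) / s) * exp (-((z - c) / s) ^ 2) := by
  rw [iteratedDeriv_comp_sub_div (f := fun x => exp (-x ^ 2)) (by fun_prop),
    iteratedDeriv_exp_neg_sq, neg_div, neg_eq_neg_one_mul (1 / s), mul_pow]
  ring

section BlackScholes

variable {τ σ : ℝ}

noncomputable def dPlus (τ k σ z : ℝ) : ℝ := (z - k + σ ^ 2 * τ / 2) / (σ * √τ)

noncomputable def dMinus (τ k σ z : ℝ) : ℝ := (z - k - σ ^ 2 * τ / 2) / (σ * √τ)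

theorem dPlus_eq_dMinus_add (hτ : 0 ≤ τ) (k σ z : ℝ) :
    dPlus τ k σ z = dMinus τ k σ z + σ * √τ := by
  have hvar : σ ^ 2 * τ = σ * √τ * (σ * √τ) := by rw [← sq, mul_pow, sq_sqrt hτ]
  calc dPlus τ k σ z = dMinus τ k σ z + σ * √τ * (σ * √τ) / (σ * √τ) := by
        rw [dPlus, dMinus, hvar]
        ring
    _ = dMinus τ k σ z + σ * √τ := by rw [mul_self_div_self]

theorem exp_mul_normPDF_dPlus (hτ : 0 < τ) (hσ : σ ≠ 0) (k z : ℝ) :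
    exp z * normPDF (dPlus τ k σ z) = exp k * normPDF (dMinus τ k σ z) := by
  have hd : dMinus τ k σ z * (σ * √τ) = z - k - (σ * √τ) ^ 2 / 2 := by
    rw [dMinus, div_mul_cancel₀ _ (by positivity), mul_pow, sq_sqrt hτ.le]
  rw [dPlus_eq_dMinus_add hτ.le, normPDF, normPDF, mul_left_comm, mul_left_comm (exp k),
    ← exp_add, ← exp_add]
  congr 2
  linear_combination -hd

theorem hasDerivAt_dPlus (τ k σ z : ℝ) : HasDerivAt (dPlus τ k σ) (1 / (σ * √τ)) z :=
  (((hasDerivAt_id z).sub_const k).add_const _).div_const _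

theorem hasDerivAt_dMinus (τ k σ z : ℝ) : HasDerivAt (dMinus τ k σ) (1 / (σ * √τ)) z :=
  (((hasDerivAt_id z).sub_const k).sub_const _).div_const _

theorem hasDerivAt_exp_mul_normCDF_dPlus (τ k σ z : ℝ) :
    HasDerivAt (fun z => exp z * normCDF (dPlus τ k σ z))
      (exp z * normCDF (dPlus τ k σ z) + exp z * normPDF (dPlus τ k σ z) / (σ * √τ)) z := by
  have h := (hasDerivAt_exp z).mul ((hasDerivAt_normCDF _).comp z (hasDerivAt_dPlus τ k σ z))
  refine h.congr_deriv ?_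
  simp only [Function.comp_apply]
  ring

theorem hasDerivAt_uBS (hτ : 0 < τ) (hσ : σ ≠ 0) (k z : ℝ) :
    HasDerivAt (uBS τ k σ) (exp z * normCDF (dPlus τ k σ z)) z := by
  have h := (hasDerivAt_exp_mul_normCDF_dPlus τ k σ z).sub
    (((hasDerivAt_normCDF _).comp z (hasDerivAt_dMinus τ k σ z)).const_mul (exp k))
  refine h.congr_deriv ?_
  rw [mul_div_assoc', exp_mul_normPDF_dPlus hτ hσ]
  ring

theorem deriv_deriv_uBS_sub_deriv_uBS (hτ : 0 < τ) (hσ : σ ≠ 0) (k z : ℝ) :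
    deriv (deriv (uBS τ k σ)) z - deriv (uBS τ k σ) z
      = exp k * normPDF (dMinus τ k σ z) / (σ * √τ) := by
  have hderiv : deriv (uBS τ k σ) = fun z => exp z * normCDF (dPlus τ k σ z) :=
    funext fun z => (hasDerivAt_uBS hτ hσ k z).deriv
  rw [hderiv, (hasDerivAt_exp_mul_normCDF_dPlus τ k σ z).deriv, exp_mul_normPDF_dPlus hτ hσ]
  ring

theorem hasDerivAt_uBS_volatility (hτ : 0 < τ) (hσ : σ ≠ 0) (k z : ℝ) :
    HasDerivAt (fun σ' => uBS τ k σ' z) (exp k * normPDF (dMinus τ k σ z) * √τ) σ := by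
  obtain ⟨D, hMinus⟩ : ∃ D, HasDerivAt (fun σ' => dMinus τ k σ' z) D σ := by
    refine ⟨_, DifferentiableAt.hasDerivAt ?_⟩
    unfold dMinus
    fun_prop (disch := positivity)
  -- `d₊ = d₋ + σ√τ`, and the `∂_σ d₋` terms cancel by `exp_mul_normPDF_dPlus`.
  have hPlus : HasDerivAt (fun σ' => dPlus τ k σ' z) (D + √τ) σ := by
    simp only [dPlus_eq_dMinus_add hτ.le]
    exact hMinus.add (hasDerivAt_mul_const √τ)
  refine (((hasDerivAt_normCDF _).comp σ hPlus).const_mul (exp z)).sub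
    (((hasDerivAt_normCDF _).comp σ hMinus).const_mul (exp k)) |>.congr_deriv ?_
  rw [← mul_assoc, exp_mul_normPDF_dPlus hτ hσ]
  ring

end BlackScholes

theorem hermite_identity_for_dz_derivatives
    (τ σ k : ℝ) (hτ : 0 < τ) (hσ : 0 < σ)
    (G : ℝ → ℝ)
    (hG : ∀ z : ℝ, G z =
      deriv (deriv fun z' => uBS τ k σ z') z - deriv (fun z' => uBS τ k σ z') z) :
    ∀ (m : ℕ) (z : ℝ),
      iteratedDeriv m G z
        = (-1 / Real.sqrt (2 * σ ^ 2 * τ)) ^ m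
          * physHermite m ((z - k - σ ^ 2 * τ / 2) / Real.sqrt (2 * σ ^ 2 * τ))
          * (1 / (τ * σ))
          * deriv (fun σ' => uBS τ k σ' z) σ := by
  intro m z
  have hPDF (z : ℝ) : normPDF (dMinus τ k σ z)
      = (2 * π) ^ (-(1 : ℝ) / 2) * exp (-((z - (k + σ ^ 2 * τ / 2)) / √(2 * σ ^ 2 * τ)) ^ 2) := by
    rw [dMinus, normPDF_div, mul_pow, sq_sqrt hτ.le, ← mul_assoc, sub_sub]
  have hGauss : G = fun z => exp k * (2 * π) ^ (-(1 : ℝ) / 2) / (σ * √τ)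
      * exp (-((z - (k + σ ^ 2 * τ / 2)) / √(2 * σ ^ 2 * τ)) ^ 2) := by
    funext z
    rw [hG, deriv_deriv_uBS_sub_deriv_uBS hτ hσ.ne', hPDF]
    ring
  rw [hGauss, iteratedDeriv_const_mul_field, iteratedDeriv_exp_neg_sq_comp_sub_div,
    (hasDerivAt_uBS_volatility hτ hσ.ne' k z).deriv, hPDF, sub_sub]
  field_simp
  rw [sq_sqrt hτ.le]
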